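/- Suppose r is odd. Then for every β ∈ F_q, the number n₂(β) of w ∈ O^-(2,q) with Tr(w) = β equals: 0 if β² − 1 is a nonzero square in F_q; 1 if β² − 1 = 0; 2 if β² − 1 is a nonsquare different from −1; and q+3 if β² − 1 = −1. -/

import Mathlib

open Matrix
open scoped BigOperators Classical

noncomputable section

abbrev Fq (r : ℕ) : Type := GaloisField 3 r
noncomputable instance (r : ℕ) : Fintype (Fq r) := Fintype.ofFinite _

def deltaEps (r : ℕ) (ε : Fq r) : Matrix (Fin 2) (Fin 2) (Fq r) := !![1, 0; 0, -ε]

def Ominus2 (r : ℕ) (ε : Fq r) : Finset (Matrix (Fin 2) (Fin 2) (Fq r)) :=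
  Finset.univ.filter (fun w => IsUnit w.det ∧ wᵀ * deltaEps r ε * w = deltaEps r ε)

/-- `n₂(β)`, the number of elements of `O⁻(2, q)` with trace `β`. -/
def nTwo (r : ℕ) (ε : Fq r) (β : Fq r) : ℕ :=
  ((Ominus2 r ε).filter (fun w => w.trace = β)).card


/-!
An isometry of the anisotropic form `x² - ε y²` is determined by its first column `(a, c)`, a
point of the conic `a² - ε c² = 1`, and by its determinant `±1`: it is either the rotation
`!![a, ε c; c, a]` or the reflection `!![a, -ε c; c, -a]`. A rotation has trace `2a`, so those
of trace `β` correspond to the square roots of `((β/2)² - 1) / ε`, of which there are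
`1 - χ((β/2)² - 1)` for the quadratic character `χ`. All reflections have trace `0`, and there
are as many of them as points on the conic, namely `q + 1` (by stereographic projection).
In characteristic `3`, `(β/2)² = β²`; for `r` odd, `-1` is a nonsquare, and `β² - 1 = -1` is
exactly the case `β = 0`.
-/

open Finset

lemma ne_zero_of_not_isSquare {M₀ : Type*} [MulZeroClass M₀] {a : M₀} (h : ¬IsSquare a) :
    a ≠ 0 := by
  rintro rfl
  exact h .zero

section Isometry

variable {K : Type*} [Field K] {ε : K}

def IsIsometry (ε : K) (w : Matrix (Fin 2) (Fin 2) K) : Prop :=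
  wᵀ * !![1, 0; 0, -ε] * w = !![1, 0; 0, -ε]

def rotationMatrix (ε a c : K) : Matrix (Fin 2) (Fin 2) K := !![a, ε * c; c, a]

def reflectionMatrix (ε a c : K) : Matrix (Fin 2) (Fin 2) K := !![a, -(ε * c); c, -a]

lemma isIsometry_of_fin_two (ε a b c d : K) :
    IsIsometry ε !![a, b; c, d] ↔
      a ^ 2 - ε * c ^ 2 = 1 ∧ a * b - ε * (c * d) = 0 ∧ b ^ 2 - ε * d ^ 2 = -ε := by
  rw [IsIsometry, ← Matrix.ext_iff]
  simp only [Fin.forall_fin_two, Matrix.mul_apply, Fin.sum_univ_two, Matrix.transpose_apply,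
    Matrix.of_apply, Matrix.cons_val', Matrix.cons_val_zero, Matrix.cons_val_one,
    Matrix.empty_val', Matrix.cons_val_fin_one]
  constructor
  · rintro ⟨⟨h₀₀, h₀₁⟩, -, h₁₁⟩
    exact ⟨by linear_combination h₀₀, by linear_combination h₀₁, by linear_combination h₁₁⟩
  · rintro ⟨h₀₀, h₀₁, h₁₁⟩
    exact ⟨⟨by linear_combination h₀₀, by linear_combination h₀₁⟩, by linear_combination h₀₁,
      by linear_combination h₁₁⟩

lemma IsIsometry.det_sq (hε : ε ≠ 0) {w : Matrix (Fin 2) (Fin 2) K} (hw : IsIsometry ε w) :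
    w.det ^ 2 = 1 := by
  have h := congrArg Matrix.det hw
  rw [Matrix.det_mul, Matrix.det_mul, Matrix.det_transpose, Matrix.det_fin_two_of] at h
  exact mul_left_cancel₀ (neg_ne_zero.mpr hε) (by linear_combination h)

lemma isIsometry_rotationMatrix {a c : K} (h : a ^ 2 - ε * c ^ 2 = 1) :
    IsIsometry ε (rotationMatrix ε a c) :=
  (isIsometry_of_fin_two ..).mpr ⟨h, by ring, by linear_combination (-ε) * h⟩

lemma isIsometry_reflectionMatrix {a c : K} (h : a ^ 2 - ε * c ^ 2 = 1) :
    IsIsometry ε (reflectionMatrix ε a c) :=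
  (isIsometry_of_fin_two ..).mpr ⟨h, by ring, by linear_combination (-ε) * h⟩

lemma isIsometry_iff (hε : ε ≠ 0) {w : Matrix (Fin 2) (Fin 2) K} :
    IsIsometry ε w ↔ ∃ a c, a ^ 2 - ε * c ^ 2 = 1 ∧
      (w = rotationMatrix ε a c ∨ w = reflectionMatrix ε a c) := by
  refine ⟨fun hw => ?_, ?_⟩
  · have hdet := hw.det_sq hε
    obtain ⟨a, b, c, d, rfl⟩ : ∃ a b c d, w = !![a, b; c, d] := ⟨_, _, _, _, w.eta_fin_two⟩
    obtain ⟨h₀₀, h₀₁, -⟩ := (isIsometry_of_fin_two ..).mp hw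
    rw [Matrix.det_fin_two_of] at hdet
    -- the second column is orthogonal to the first, hence a multiple of `(ε c, a)`
    have hb : b = (a * d - b * c) * (ε * c) := by linear_combination (-b) * h₀₀ + a * h₀₁
    have hd : d = (a * d - b * c) * a := by linear_combination (-d) * h₀₀ + c * h₀₁
    generalize a * d - b * c = D at hb hd hdet
    refine ⟨a, c, h₀₀, ?_⟩
    rcases sq_eq_one_iff.mp hdet with rfl | rfl
    · left; simp [rotationMatrix, hb, hd]
    · right; simp [reflectionMatrix, hb, hd]
  · rintro ⟨a, c, h, rfl | rfl⟩
    exacts [isIsometry_rotationMatrix h, isIsometry_reflectionMatrix h]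

lemma trace_rotationMatrix (ε a c : K) : (rotationMatrix ε a c).trace = 2 * a := by
  rw [rotationMatrix, Matrix.trace_fin_two_of, two_mul]

lemma trace_reflectionMatrix (ε a c : K) : (reflectionMatrix ε a c).trace = 0 := by
  rw [reflectionMatrix, Matrix.trace_fin_two_of, add_neg_cancel]

lemma det_rotationMatrix (ε a c : K) : (rotationMatrix ε a c).det = a ^ 2 - ε * c ^ 2 := by
  rw [rotationMatrix, Matrix.det_fin_two_of]; ring

lemma det_reflectionMatrix (ε a c : K) :
    (reflectionMatrix ε a c).det = -(a ^ 2 - ε * c ^ 2) := by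
  rw [reflectionMatrix, Matrix.det_fin_two_of]; ring

lemma rotationMatrix_injective (ε a : K) : Function.Injective (rotationMatrix ε a) :=
  fun c c' h => by simpa [rotationMatrix] using congrFun (congrFun h 1) 0

lemma reflectionMatrix_injective (ε : K) :
    Function.Injective fun p : K × K => reflectionMatrix ε p.1 p.2 := fun p p' h =>
  Prod.ext (by simpa [reflectionMatrix] using congrFun (congrFun h 0) 0)
    (by simpa [reflectionMatrix] using congrFun (congrFun h 1) 0)

end Isometry

section Conic

variable {K : Type*} [Field K] {ε : K}

def conic [Fintype K] (ε : K) : Finset (K × K) := {p | p.1 ^ 2 - ε * p.2 ^ 2 = 1}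

lemma one_sub_mul_sq_ne_zero (hε : ¬IsSquare ε) (t : K) : 1 - ε * t ^ 2 ≠ 0 := by
  intro h
  have ht : t ≠ 0 := by rintro rfl; simp at h
  exact hε ⟨t⁻¹, by field_simp; linear_combination -h⟩

/-- Inverse of the stereographic projection `p ↦ p.2 / (1 + p.1)` of the conic from `(-1, 0)`. -/
def conicParam (ε t : K) : K × K :=
  ((1 + ε * t ^ 2) / (1 - ε * t ^ 2), 2 * t / (1 - ε * t ^ 2))

lemma conicParam_mem [Fintype K] (hε : ¬IsSquare ε) (t : K) :
    conicParam ε t ∈ conic ε := by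
  have hD := one_sub_mul_sq_ne_zero hε t
  simp only [conic, conicParam, mem_filter, mem_univ, true_and]
  field_simp
  ring

lemma conicParam_ne (hK : ringChar K ≠ 2) (hε : ¬IsSquare ε) (t : K) :
    conicParam ε t ≠ (-1, 0) := by
  have hD := one_sub_mul_sq_ne_zero hε t
  intro h
  have h₁ := congrArg Prod.fst h
  simp only [conicParam, div_eq_iff hD] at h₁
  exact Ring.two_ne_zero hK (by linear_combination h₁)

lemma conicParam_stereographic (hK : ringChar K ≠ 2) (hε : ¬IsSquare ε) (t : K) :
    (conicParam ε t).2 / (1 + (conicParam ε t).1) = t := by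
  have hD := one_sub_mul_sq_ne_zero hε t
  have h2 := Ring.two_ne_zero hK
  have h₁ : 1 + (1 + ε * t ^ 2) / (1 - ε * t ^ 2) = 2 / (1 - ε * t ^ 2) := by
    field_simp; ring
  simp only [conicParam, h₁]
  rw [div_div_div_cancel_right₀ hD, mul_div_cancel_left₀ t h2]

lemma conicParam_stereographic_of_mem [Fintype K] (hK : ringChar K ≠ 2) (hε : ¬IsSquare ε)
    {p : K × K} (hp : p ∈ conic ε) (hp' : p ≠ (-1, 0)) :
    conicParam ε (p.2 / (1 + p.1)) = p := by
  obtain ⟨x, y⟩ := p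
  simp only [conic, mem_filter, mem_univ, true_and] at hp
  have hx : 1 + x ≠ 0 := by
    intro hx
    obtain rfl : x = -1 := by linear_combination hx
    have : ε * y ^ 2 = 0 := by linear_combination -hp
    obtain rfl : y = 0 := by simpa [ne_zero_of_not_isSquare hε] using this
    exact hp' rfl
  have h2 := Ring.two_ne_zero hK
  have hD : (1 + x) ^ 2 - ε * y ^ 2 = 2 * (1 + x) := by linear_combination hp
  simp only [conicParam, Prod.ext_iff]
  field_simp
  rw [hD]
  constructor
  · field_simp
    linear_combination -hp
  · field_simp

lemma card_conic [Fintype K] (hK : ringChar K ≠ 2) (hε : ¬IsSquare ε) :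
    #(conic ε) = Fintype.card K + 1 := by
  have hpt : ((-1, 0) : K × K) ∈ conic ε := by simp [conic]
  rw [← card_erase_add_one hpt, ← card_univ]
  congr 1
  refine card_nbij' (fun p => p.2 / (1 + p.1)) (conicParam ε)
    (fun _ _ => mem_coe.mpr (mem_univ _))
    (fun t _ => mem_erase.mpr ⟨conicParam_ne hK hε t, conicParam_mem hε t⟩)
    (fun p hp => ?_) (fun t _ => conicParam_stereographic hK hε t)
  obtain ⟨hp', hp⟩ := mem_erase.mp hp
  exact conicParam_stereographic_of_mem hK hε hp hp'

end Conic

section TraceCount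

variable {K : Type*} [Field K] [Fintype K] {ε : K}

lemma card_mul_sq_eq (hK : ringChar K ≠ 2) (hε : ¬IsSquare ε) (m : K) :
    (#{c : K | ε * c ^ 2 = m} : ℤ) = 1 - quadraticChar K m := by
  have hε₀ := ne_zero_of_not_isSquare hε
  have hset : ({c : K | ε * c ^ 2 = m} : Finset K) = {c : K | c ^ 2 = m / ε}.toFinset := by
    ext c
    simp only [mem_filter, mem_univ, true_and, Set.mem_toFinset, Set.mem_ofPred_eq,
      eq_div_iff hε₀, mul_comm ε]
  have hχ : quadraticChar K (m / ε) * quadraticChar K ε = quadraticChar K m := by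
    rw [← map_mul, div_mul_cancel₀ _ hε₀]
  rw [quadraticChar_neg_one_iff_not_isSquare.mpr hε] at hχ
  rw [hset, quadraticChar_card_sqrts hK]
  linear_combination -hχ

lemma card_isIsometry_trace_eq_of_ne_zero (hK : ringChar K ≠ 2) (hε : ε ≠ 0) {β : K}
    (hβ : β ≠ 0) :
    #{w : Matrix (Fin 2) (Fin 2) K | IsIsometry ε w ∧ w.trace = β}
      = #{c : K | ε * c ^ 2 = (β / 2) ^ 2 - 1} := by
  have h2 := Ring.two_ne_zero hK
  rw [← card_image_of_injective _ (rotationMatrix_injective ε (β / 2))]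
  congr 1
  ext w
  simp only [mem_filter, mem_univ, true_and, mem_image, isIsometry_iff hε]
  constructor
  · rintro ⟨⟨a, c, h, rfl | rfl⟩, htr⟩
    · rw [trace_rotationMatrix] at htr
      obtain rfl : a = β / 2 := by rw [eq_div_iff h2]; linear_combination htr
      exact ⟨c, by linear_combination -h, rfl⟩
    · exact absurd (trace_reflectionMatrix ε a c ▸ htr).symm hβ
  · rintro ⟨c, hc, rfl⟩
    exact ⟨⟨β / 2, c, by linear_combination -hc, Or.inl rfl⟩,
      by rw [trace_rotationMatrix, mul_div_cancel₀ β h2]⟩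

lemma card_isIsometry_trace_eq_zero (hK : ringChar K ≠ 2) (hε : ε ≠ 0) :
    #{w : Matrix (Fin 2) (Fin 2) K | IsIsometry ε w ∧ w.trace = 0}
      = #{c : K | ε * c ^ 2 = -1} + #(conic ε) := by
  have h2 := Ring.two_ne_zero hK
  rw [← card_image_of_injective _ (rotationMatrix_injective ε 0),
    ← card_image_of_injective _ (reflectionMatrix_injective ε), ← card_union_of_disjoint]
  · congr 1
    ext w
    simp only [mem_filter, mem_univ, true_and, mem_union, mem_image, isIsometry_iff hε, conic,
      Prod.exists]
    constructor
    · rintro ⟨⟨a, c, h, rfl | rfl⟩, htr⟩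
      · rw [trace_rotationMatrix] at htr
        obtain rfl : a = 0 := (mul_eq_zero.mp htr).resolve_left h2
        exact .inl ⟨c, by linear_combination -h, rfl⟩
      · exact .inr ⟨a, c, h, rfl⟩
    · rintro (⟨c, hc, rfl⟩ | ⟨a, c, h, rfl⟩)
      · exact ⟨⟨0, c, by linear_combination -hc, .inl rfl⟩,
          by rw [trace_rotationMatrix, mul_zero]⟩
      · exact ⟨⟨a, c, h, .inr rfl⟩, trace_reflectionMatrix ε a c⟩
  · simp only [disjoint_left, mem_image, conic, mem_filter, mem_univ, true_and]
    rintro _ ⟨c, hc, rfl⟩ ⟨p, hp, h⟩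
    have hdet := congrArg Matrix.det h
    rw [det_reflectionMatrix, det_rotationMatrix, hp] at hdet
    exact h2 (by linear_combination -hdet + hc)

end TraceCount

namespace Fq

variable {r : ℕ}

lemma ringChar_eq : ringChar (Fq r) = 3 := ringChar.eq (Fq r) 3

lemma card_eq (hr : r ≠ 0) : Fintype.card (Fq r) = 3 ^ r := by
  rw [← Nat.card_eq_fintype_card]
  exact GaloisField.card 3 r hr

lemma not_isSquare_neg_one (hr : Odd r) : ¬IsSquare (-1 : Fq r) := by
  rw [FiniteField.isSquare_neg_one_iff, card_eq hr.pos.ne', not_not]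
  obtain ⟨k, rfl⟩ := hr
  rw [pow_succ, pow_mul, Nat.mul_mod, Nat.pow_mod]
  norm_num

lemma div_two_sq (β : Fq r) : (β / 2) ^ 2 = β ^ 2 := by
  have h : (2 : Fq r) = -1 := by
    linear_combination (CharP.cast_eq_zero (Fq r) 3 : (3 : Fq r) = 0)
  rw [h, div_neg, div_one, neg_sq]

end Fq

lemma nTwo_eq_card {r : ℕ} {ε : Fq r} (hε : ε ≠ 0) (β : Fq r) :
    nTwo r ε β = #{w | IsIsometry ε w ∧ w.trace = β} := by
  rw [nTwo, Ominus2, filter_filter]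
  refine congrArg card (filter_congr fun w _ => ?_)
  refine and_congr_left' (and_iff_right_of_imp fun hw => ?_)
  exact isUnit_iff_ne_zero.mpr fun h => by simpa [h] using IsIsometry.det_sq hε hw

lemma nTwo_eq {r : ℕ} (hr : Odd r) {ε : Fq r} (hε : ¬IsSquare ε) (β : Fq r) :
    (nTwo r ε β : ℤ) = 1 - quadraticChar (Fq r) (β ^ 2 - 1) + if β = 0 then 3 ^ r + 1 else 0 := by
  have hK : ringChar (Fq r) ≠ 2 := by rw [Fq.ringChar_eq]; norm_num
  have hε₀ := ne_zero_of_not_isSquare hε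
  rw [nTwo_eq_card hε₀]
  by_cases hβ : β = 0
  · subst hβ
    rw [card_isIsometry_trace_eq_zero hK hε₀, card_conic hK hε, Fq.card_eq hr.pos.ne',
      if_pos rfl]
    push_cast
    rw [card_mul_sq_eq hK hε, zero_pow two_ne_zero, zero_sub]
  · rw [card_isIsometry_trace_eq_of_ne_zero hK hε₀ hβ, card_mul_sq_eq hK hε, Fq.div_two_sq,
      if_neg hβ, add_zero]

theorem stmt16_general (r : ℕ) (hrodd : Odd r) (ε : Fq r) (hε : ¬ IsSquare ε)
    (β : Fq r) :
    (IsSquare (β ^ 2 - 1) ∧ β ^ 2 - 1 ≠ 0 → nTwo r ε β = 0)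
    ∧ (β ^ 2 - 1 = 0 → nTwo r ε β = 1)
    ∧ (¬ IsSquare (β ^ 2 - 1) ∧ β ^ 2 - 1 ≠ -1 → nTwo r ε β = 2)
    ∧ (β ^ 2 - 1 = -1 → nTwo r ε β = 3 ^ r + 3) := by
  have hneg := Fq.not_isSquare_neg_one hrodd
  have hβ : β = 0 ↔ β ^ 2 - 1 = -1 :=
    ⟨by rintro rfl; ring, fun h => pow_eq_zero_iff two_ne_zero |>.mp (by linear_combination h)⟩
  have key := nTwo_eq hrodd hε β
  simp only [hβ] at key
  refine ⟨fun ⟨hsq, hne⟩ => ?_, fun h => ?_, fun ⟨hnsq, hne⟩ => ?_, fun h => ?_⟩ <;> zify <;>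
    rw [key]
  · rw [(quadraticChar_one_iff_isSquare hne).mpr hsq,
      if_neg fun h : β ^ 2 - 1 = -1 => hneg (h ▸ hsq)]
    ring
  · rw [h, quadraticChar_zero, if_neg (by simp)]
    ring
  · rw [quadraticChar_neg_one_iff_not_isSquare.mpr hnsq, if_neg hne]
    ring
  · rw [h, quadraticChar_neg_one_iff_not_isSquare.mpr hneg, if_pos rfl]
    ring

theorem stmt16 (r : ℕ) (hr : 0 < r) (hrodd : Odd r) (ε : Fq r) (hε : ¬ IsSquare ε)
    (β : Fq r) :
    (IsSquare (β ^ 2 - 1) ∧ β ^ 2 - 1 ≠ 0 → nTwo r ε β = 0)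
    ∧ (β ^ 2 - 1 = 0 → nTwo r ε β = 1)
    ∧ (¬ IsSquare (β ^ 2 - 1) ∧ β ^ 2 - 1 ≠ -1 → nTwo r ε β = 2)
    ∧ (β ^ 2 - 1 = -1 → nTwo r ε β = 3 ^ r + 3) :=
  stmt16_general r hrodd ε hε β
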